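/- arXiv:0908.3735 — 2 statements merged into one kernel-verified Lean document; each statement's English description precedes it below -/
import Mathlib

section
/- Let U, M be nonnegative random variables with P(U > 0) > 0 and E[M] ≤ 1. Then the function F(λ) = λ + log E[exp(−U − λM)] is convex on [0,∞), satisfies F(0) < 0, and has at most one zero in (0,∞). -/
open MeasureTheory

/-- For nonnegative random variables `U, M` with `P(U > 0) > 0` and `E[M] ≤ 1`,
the function `F(λ) = λ + log E[exp(−U − λM)]` is convex on `[0,∞)`, satisfies
`F(0) < 0`, and has at most one zero in `(0,∞)`. -/
theorem stmt1 {Ω : Type*} [MeasurableSpace Ω] (μ : Measure Ω) [IsProbabilityMeasure μ]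
    (U M : Ω → ℝ) (hUmeas : Measurable U) (hMmeas : Measurable M)
    (hUnonneg : ∀ ω, 0 ≤ U ω) (hMnonneg : ∀ ω, 0 ≤ M ω)
    (hUpos : 0 < μ {ω | 0 < U ω})
    (hMint : Integrable M μ) (hMmean : ∫ ω, M ω ∂μ ≤ 1)
    (F : ℝ → ℝ)
    (hF : ∀ l : ℝ, F l = l + Real.log (∫ ω, Real.exp (-U ω - l * M ω) ∂μ)) :
    ConvexOn ℝ (Set.Ici (0 : ℝ)) F ∧ F 0 < 0 ∧
      ∀ a b : ℝ, 0 < a → 0 < b → F a = 0 → F b = 0 → a = b := by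
  set g : ℝ → ℝ := fun l => ∫ ω, Real.exp (-U ω - l * M ω) ∂μ with hg
  have hmeas : ∀ l : ℝ, Measurable fun ω => Real.exp (-U ω - l * M ω) := by
    intro l
    exact ((hUmeas.neg.sub (hMmeas.const_mul l)).exp)
  have hle1 : ∀ l : ℝ, 0 ≤ l → ∀ ω, Real.exp (-U ω - l * M ω) ≤ 1 := by
    intro l hl ω
    rw [show (1:ℝ) = Real.exp 0 by simp]
    apply Real.exp_le_exp.2
    have := hUnonneg ω
    have := mul_nonneg hl (hMnonneg ω)
    linarith
  have hint : ∀ l : ℝ, 0 ≤ l → Integrable (fun ω => Real.exp (-U ω - l * M ω)) μ := by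
    intro l hl
    refine (integrable_const (1:ℝ)).mono' (hmeas l).aestronglyMeasurable ?_
    filter_upwards with ω
    rw [Real.norm_eq_abs, abs_of_pos (Real.exp_pos _)]
    exact hle1 l hl ω
  have hgpos : ∀ l : ℝ, 0 ≤ l → 0 < g l := by
    intro l hl
    simp only [hg]
    rw [integral_pos_iff_support_of_nonneg_ae]
    · have : Function.support (fun ω => Real.exp (-U ω - l * M ω)) = Set.univ := by
        ext ω; simp [Function.support, (Real.exp_pos _).ne']
      rw [this]
      simp
    · filter_upwards with ω using (Real.exp_pos _).le
    · exact hint l hl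
  -- lintegral formulation
  have hlin : ∀ l : ℝ, 0 ≤ l →
      ∫⁻ ω, ENNReal.ofReal (Real.exp (-U ω - l * M ω)) ∂μ = ENNReal.ofReal (g l) := by
    intro l hl
    simp only [hg]
    rw [integral_eq_lintegral_of_nonneg_ae (Filter.Eventually.of_forall fun ω => (Real.exp_pos _).le)
      (hmeas l).aestronglyMeasurable]
    rw [ENNReal.ofReal_toReal]
    refine ne_of_lt (lt_of_le_of_lt ?_ ENNReal.one_lt_top)
    calc ∫⁻ ω, ENNReal.ofReal (Real.exp (-U ω - l * M ω)) ∂μ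
        ≤ ∫⁻ _, 1 ∂μ := by
          apply lintegral_mono
          intro ω
          exact ENNReal.ofReal_le_one.2 (hle1 l hl ω)
      _ = 1 := by simp
  -- convexity
  have hconv : ConvexOn ℝ (Set.Ici (0 : ℝ)) F := by
    refine ⟨convex_Ici 0, ?_⟩
    intro x hx y hy a b ha hb hab
    rcases ha.eq_or_lt with rfl | ha'
    · simp only [zero_add] at hab; subst hab; simp
    rcases hb.eq_or_lt with rfl | hb'
    · simp only [add_zero] at hab; subst hab; simp
    simp only [smul_eq_mul] at *
    have hx0 : (0:ℝ) ≤ x := hx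
    have hy0 : (0:ℝ) ≤ y := hy
    have hz0 : (0:ℝ) ≤ a * x + b * y := by positivity
    rw [hF, hF, hF]
    have key : g (a * x + b * y) ≤ g x ^ a * g y ^ b := by
      have hH := ENNReal.lintegral_mul_norm_pow_le (μ := μ)
        (f := fun ω => ENNReal.ofReal (Real.exp (-U ω - x * M ω)))
        (g := fun ω => ENNReal.ofReal (Real.exp (-U ω - y * M ω)))
        ((hmeas x).ennreal_ofReal.aemeasurable) ((hmeas y).ennreal_ofReal.aemeasurable)
        ha hb hab
      have hpt : ∀ ω, ENNReal.ofReal (Real.exp (-U ω - (a * x + b * y) * M ω)) =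
          ENNReal.ofReal (Real.exp (-U ω - x * M ω)) ^ a *
          ENNReal.ofReal (Real.exp (-U ω - y * M ω)) ^ b := by
        intro ω
        have harg : -U ω - (a * x + b * y) * M ω =
            (-U ω - x * M ω) * a + (-U ω - y * M ω) * b := by
          linear_combination (U ω) * hab
        rw [harg, Real.exp_add, Real.exp_mul, Real.exp_mul,
            ENNReal.ofReal_mul (by positivity),
            ← ENNReal.ofReal_rpow_of_pos (Real.exp_pos _),
            ← ENNReal.ofReal_rpow_of_pos (Real.exp_pos _)]
      have heq : ∫⁻ ω, ENNReal.ofReal (Real.exp (-U ω - (a*x+b*y) * M ω)) ∂μ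
          ≤ (∫⁻ ω, ENNReal.ofReal (Real.exp (-U ω - x * M ω)) ∂μ) ^ a *
            (∫⁻ ω, ENNReal.ofReal (Real.exp (-U ω - y * M ω)) ∂μ) ^ b := by
        calc ∫⁻ ω, ENNReal.ofReal (Real.exp (-U ω - (a*x+b*y) * M ω)) ∂μ
            = ∫⁻ ω, ENNReal.ofReal (Real.exp (-U ω - x * M ω)) ^ a *
              ENNReal.ofReal (Real.exp (-U ω - y * M ω)) ^ b ∂μ := by
              congr 1; funext ω; exact hpt ω
          _ ≤ _ := hH
      rw [hlin _ hz0, hlin _ hx0, hlin _ hy0] at heq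
      rw [ENNReal.ofReal_rpow_of_pos (hgpos x hx0),
          ENNReal.ofReal_rpow_of_pos (hgpos y hy0),
          ← ENNReal.ofReal_mul (by positivity)] at heq
      exact (ENNReal.ofReal_le_ofReal_iff (by positivity)).1 heq
    have hlog : Real.log (g (a * x + b * y)) ≤ a * Real.log (g x) + b * Real.log (g y) := by
      calc Real.log (g (a * x + b * y)) ≤ Real.log (g x ^ a * g y ^ b) :=
            Real.log_le_log (hgpos _ hz0) key
        _ = a * Real.log (g x) + b * Real.log (g y) := by
            rw [Real.log_mul (Real.rpow_pos_of_pos (hgpos x hx0) a).ne' (Real.rpow_pos_of_pos (hgpos y hy0) b).ne',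
              Real.log_rpow (hgpos x hx0), Real.log_rpow (hgpos y hy0)]
    linarith [hlog]
  -- F 0 < 0
  have hF0 : F 0 < 0 := by
    rw [hF]
    simp only [zero_mul, sub_zero, zero_add]
    have hI : ∫ ω, Real.exp (-U ω - 0 * M ω) ∂μ = ∫ ω, Real.exp (-U ω) ∂μ := by
      congr 1; funext ω; rw [zero_mul, sub_zero]
    have hint0 : Integrable (fun ω => Real.exp (-U ω)) μ := by
      have := hint 0 le_rfl
      simpa using this
    have hIlt : ∫ ω, Real.exp (-U ω) ∂μ < 1 := by
      by_contra h
      push_neg at h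
      have hle : ∫ ω, Real.exp (-U ω) ∂μ ≤ 1 := by
        calc ∫ ω, Real.exp (-U ω) ∂μ ≤ ∫ _, (1:ℝ) ∂μ := by
              apply integral_mono hint0 (integrable_const 1)
              intro ω
              have := hle1 0 le_rfl ω
              simpa using this
          _ = 1 := by simp
      have heq1 : ∫ ω, Real.exp (-U ω) ∂μ = 1 := le_antisymm hle h
      have hzero : ∫ ω, (1 - Real.exp (-U ω)) ∂μ = 0 := by
        rw [integral_sub (integrable_const 1) hint0]
        simp [heq1]
      have hae : (fun ω => 1 - Real.exp (-U ω)) =ᵐ[μ] 0 := by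
        refine (integral_eq_zero_iff_of_nonneg ?_ ((integrable_const 1).sub hint0)).mp hzero
        intro ω
        show (0:ℝ) ≤ 1 - Real.exp (-U ω)
        have := hle1 0 le_rfl ω
        simp only [zero_mul, sub_zero] at this
        linarith
      have hU0 : ∀ᵐ ω ∂μ, U ω = 0 := by
        filter_upwards [hae] with ω hω
        simp only [Pi.zero_apply] at hω
        have hexp : Real.exp (-U ω) = 1 := by linarith
        have : -U ω = 0 := Real.exp_injective (hexp.trans Real.exp_zero.symm)
        linarith
      have : μ {ω | 0 < U ω} = 0 := by
        refine measure_mono_null ?_ (μ := μ) (ae_iff.mp hU0)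
        intro ω hω
        simp only [Set.mem_setOf_eq] at *
        exact ne_of_gt hω
      exact absurd this (ne_of_gt hUpos)
    have hIpos : 0 < ∫ ω, Real.exp (-U ω) ∂μ := by
      have := hgpos 0 le_rfl
      rw [hg] at this
      simpa using this
    exact Real.log_neg hIpos hIlt
  refine ⟨hconv, hF0, ?_⟩
  -- uniqueness of zero
  have key : ∀ a b : ℝ, 0 < a → F a = 0 → F b = 0 → a < b → False := by
    intro a b ha hFa hFb hab
    have hb : 0 < b := ha.trans hab
    set t : ℝ := a / b with ht
    have ht0 : 0 < t := div_pos ha hb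
    have ht1 : t < 1 := (div_lt_one hb).2 hab
    have hineq : F ((1 - t) * 0 + t * b) ≤ (1 - t) * F 0 + t * F b :=
      hconv.2 (Set.mem_Ici.2 le_rfl) (Set.mem_Ici.2 hb.le)
        (by linarith : (0:ℝ) ≤ 1 - t) ht0.le (by ring)
    rw [mul_zero, zero_add, show t * b = a by rw [ht, div_mul_cancel₀ _ hb.ne'], hFa, hFb] at hineq
    nlinarith
  intro a b ha hb hFa hFb
  rcases lt_trichotomy a b with h | h | h
  · exact absurd (key a b ha hFa hFb h) (fun h => h)
  · exact h
  · exact absurd (key b a hb hFb hFa h) (fun h => h)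
end

section
/- Suppose Λ(dx₁ dx₂) = Λ⁽¹⁾(dx₁) δ₀(dx₂) + δ₀(dx₁) Λ⁽²⁾(dx₂) is supported on the coordinate axes, with ∫(1∧x)Λ⁽¹⁾(dx) < ∞, ∫ x Λ⁽²⁾(dx) ≤ 1. Let φ : [0,∞) → [0,∞) be the unique function satisfying q = φ(q) − ∫(1 − e^{−φ(q)x₂}) Λ⁽²⁾(dx₂) for all q ≥ 0. Then for every bounded measurable f : (0,∞) → ℝ₊ with compact support, λ = φ(∫(1 − e^{−f(x₁)}) Λ⁽¹⁾(dx₁)) is the unique nonnegative solution of λ = ∫(1 − exp(−f(x₁) − λx₂)) dΛ(x₁,x₂). -/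
open MeasureTheory

/-- When `Λ = Λ⁽¹⁾ ⊗ δ₀ + δ₀ ⊗ Λ⁽²⁾` is supported on the axes, the cumulant
equation decouples: `λ = φ(∫(1 − e^{−f}) dΛ⁽¹⁾)` is the unique nonnegative
solution of `λ = ∫ (1 − exp(−f(x₁) − λ x₂)) dΛ`, where `φ` is the cumulant of
the first passage time, characterized by `q = φ(q) − ∫(1 − e^{−φ(q)x}) dΛ⁽²⁾`. -/
theorem stmt8 (Λ1 Λ2 : Measure ℝ)
    (hs1 : ∀ᵐ x ∂Λ1, 0 < x) (hs2 : ∀ᵐ x ∂Λ2, 0 < x)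
    (h1 : ∫⁻ x, ENNReal.ofReal (min 1 x) ∂Λ1 < ⊤)
    (h2 : ∫⁻ x, ENNReal.ofReal x ∂Λ2 ≤ 1)
    (φ : ℝ → ℝ) (hφnn : ∀ q : ℝ, 0 ≤ q → 0 ≤ φ q)
    (hφ : ∀ q : ℝ, 0 ≤ q → q = φ q - ∫ x, (1 - Real.exp (-(φ q * x))) ∂Λ2)
    (hφuniq : ∀ q z : ℝ, 0 ≤ q → 0 ≤ z →
      q = z - ∫ x, (1 - Real.exp (-(z * x))) ∂Λ2 → z = φ q)
    (f : ℝ → ℝ) (hfmeas : Measurable f) (hfnn : ∀ x, 0 ≤ f x)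
    (hfbdd : ∃ C, ∀ x, f x ≤ C) (hfcs : HasCompactSupport f)
    (hfsupp : Function.support f ⊆ Set.Ioi 0)
    (Λ : Measure (ℝ × ℝ))
    (hΛ : Λ = Λ1.map (fun x => (x, (0:ℝ))) + Λ2.map (fun x => ((0:ℝ), x))) :
    0 ≤ φ (∫ x, (1 - Real.exp (-f x)) ∂Λ1) ∧
      φ (∫ x, (1 - Real.exp (-f x)) ∂Λ1) =
        ∫ x, (1 - Real.exp (-f x.1 - φ (∫ x, (1 - Real.exp (-f x)) ∂Λ1) * x.2)) ∂Λ ∧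
      ∀ l : ℝ, 0 ≤ l → l = ∫ x, (1 - Real.exp (-f x.1 - l * x.2)) ∂Λ →
        l = φ (∫ x, (1 - Real.exp (-f x)) ∂Λ1) := by
  have hf0 : f 0 = 0 := by
    by_contra h
    exact absurd (hfsupp (Function.mem_support.2 h)) (by simp)
  set q0 : ℝ := ∫ x, (1 - Real.exp (-f x)) ∂Λ1 with hq0
  -- measurable embeddings onto the axes
  have he1 : MeasurableEmbedding (fun x : ℝ => (x, (0 : ℝ))) :=
    MeasurableEmbedding.prodMk_right MeasurableEmbedding.id 0
  have he2 : MeasurableEmbedding (fun x : ℝ => ((0 : ℝ), x)) :=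
    measurableEmbedding_prodMk_left 0
  -- identity is integrable on Λ2
  have hxint : Integrable (fun x : ℝ => x) Λ2 := by
    refine ⟨measurable_id.aestronglyMeasurable, ?_⟩
    rw [hasFiniteIntegral_iff_norm]
    have : ∫⁻ x, ENNReal.ofReal ‖x‖ ∂Λ2 = ∫⁻ x, ENNReal.ofReal x ∂Λ2 := by
      refine lintegral_congr_ae (hs2.mono fun x hx => ?_)
      simp [Real.norm_eq_abs, abs_of_pos hx]
    exact this ▸ lt_of_le_of_lt h2 (by norm_num)
  -- integrability of 1 - exp(-(l x)) on Λ2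
  have hint2 : ∀ l : ℝ, 0 ≤ l → Integrable (fun x => 1 - Real.exp (-(l * x))) Λ2 := by
    intro l hl
    refine (hxint.const_mul l).mono ?_ ?_
    · exact (measurable_const.sub ((measurable_const_mul l).neg.exp)).aestronglyMeasurable
    · filter_upwards [hs2] with x hx
      have hlx : 0 ≤ l * x := mul_nonneg hl hx.le
      have h1' : Real.exp (-(l * x)) ≤ 1 := Real.exp_le_one_iff.2 (by linarith)
      have h2' : 1 - l * x ≤ Real.exp (-(l * x)) := by
        have := Real.add_one_le_exp (-(l * x)); linarith
      rw [Real.norm_eq_abs, Real.norm_eq_abs, abs_of_nonneg (by linarith),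
        abs_of_nonneg hlx]
      linarith
  have hGmeas : ∀ l : ℝ,
      Measurable (fun p : ℝ × ℝ => 1 - Real.exp (-f p.1 - l * p.2)) := by
    intro l
    exact measurable_const.sub
      (((hfmeas.comp measurable_fst).neg.sub ((measurable_snd).const_mul l)).exp)
  have hcomp1 : ∀ l : ℝ,
      ((fun p : ℝ × ℝ => 1 - Real.exp (-f p.1 - l * p.2)) ∘ fun x => (x, (0 : ℝ)))
        = fun x => 1 - Real.exp (-f x) := by
    intro l; funext x; simp
  have hcomp2 : ∀ l : ℝ,
      ((fun p : ℝ × ℝ => 1 - Real.exp (-f p.1 - l * p.2)) ∘ fun x => ((0 : ℝ), x))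
        = fun x => 1 - Real.exp (-(l * x)) := by
    intro l; funext x; simp [hf0]
  by_cases hI : Integrable (fun x => 1 - Real.exp (-f x)) Λ1
  · -- g integrable: the integral over Λ decouples
    have hq0nn : 0 ≤ q0 := by
      refine integral_nonneg fun x => ?_
      have h' : Real.exp (-f x) ≤ 1 := Real.exp_le_one_iff.2 (by linarith [hfnn x])
      show (0 : ℝ) ≤ 1 - Real.exp (-f x)
      linarith
    have hkey : ∀ l : ℝ, 0 ≤ l →
        ∫ x, (1 - Real.exp (-f x.1 - l * x.2)) ∂Λ
          = q0 + ∫ x, (1 - Real.exp (-(l * x))) ∂Λ2 := by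
      intro l hl
      have hI1 : Integrable (fun p : ℝ × ℝ => 1 - Real.exp (-f p.1 - l * p.2))
          (Λ1.map fun x => (x, (0 : ℝ))) := by
        rw [he1.integrable_map_iff, hcomp1 l]; exact hI
      have hI2 : Integrable (fun p : ℝ × ℝ => 1 - Real.exp (-f p.1 - l * p.2))
          (Λ2.map fun x => ((0 : ℝ), x)) := by
        rw [he2.integrable_map_iff, hcomp2 l]; exact hint2 l hl
      rw [hΛ, integral_add_measure hI1 hI2, he1.integral_map, he2.integral_map]
      congr 1
      · rw [hq0]; congr 1; exact hcomp1 l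
      · congr 1; exact hcomp2 l
    have hφq0 := hφ q0 hq0nn
    have hφq0nn := hφnn q0 hq0nn
    refine ⟨hφq0nn, ?_, ?_⟩
    · rw [hkey (φ q0) hφq0nn]; linarith
    · intro l hl hleq
      rw [hkey l hl] at hleq
      exact hφuniq q0 l hq0nn hl (by linarith)
  · -- g not integrable: all integrals vanish
    have hq00 : q0 = 0 := integral_undef hI
    have hφ0 : φ 0 = 0 := (hφuniq 0 0 le_rfl le_rfl (by simp)).symm
    have hφq0 : φ q0 = 0 := by rw [hq00, hφ0]
    have hnI : ∀ l : ℝ,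
        ¬ Integrable (fun p : ℝ × ℝ => 1 - Real.exp (-f p.1 - l * p.2)) Λ := by
      intro l h
      rw [hΛ, integrable_add_measure] at h
      have := (he1.integrable_map_iff.1 h.1)
      rw [hcomp1 l] at this
      exact hI this
    have hzero : ∀ l : ℝ, ∫ x, (1 - Real.exp (-f x.1 - l * x.2)) ∂Λ = 0 :=
      fun l => integral_undef (hnI l)
    refine ⟨le_of_eq hφq0.symm, ?_, ?_⟩
    · rw [hzero, hφq0]
    · intro l hl hleq
      rw [hzero l] at hleq
      rw [hleq, hφq0]
end
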